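/- Let n ≥ 2 and let X be an anticollapsible simplicial complex on n vertices with dim X ≥ n − 3. Then X has at least one free face. -/

import Mathlib

/-!
Complements are taken in the vertex set. If the full simplex lies in `X`, any of its facets is
free; if all facets `{v}ᶜ` but not the simplex lie in `X`, then `X` is the boundary of the
simplex, to which no anticollapse applies; if some facet `{c}ᶜ` lies in `X` and another `{w}ᶜ`
does not, then `{c, w}ᶜ` is free. Otherwise the large face is `{a, b}ᶜ`, and `a`, `b` are vertices
of the Alexander dual `X* = {s | sᶜ ∉ X}`. Anticollapses of `X` are collapses of `X*`, and these
preserve connectedness of the 1-skeleton; the dual of the simplex is empty, so `a` and `b` are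
joined by a path in the 1-skeleton of `X*`. Without free faces this 1-skeleton is transitive:
if `ac` and `cb` are edges but `{a, b}ᶜ ∈ X`, then `{a, b, c}ᶜ` is a free face of `{a, b}ᶜ`.
So `ab` is an edge, i.e. `{a, b}ᶜ ∉ X`, a contradiction.
-/

/-- A simplicial complex: a collection of finite subsets of the vertex type,
closed under taking subsets. -/
def IsComplex {V : Type*} [DecidableEq V] (X : Set (Finset V)) : Prop :=
  ∀ σ ∈ X, ∀ τ : Finset V, τ ⊆ σ → τ ∈ X

/-- `τ` is a free face of `X`, with `σ` the unique face of `X` properly containing `τ`. -/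
def IsFreeFace {V : Type*} [DecidableEq V] (X : Set (Finset V)) (τ σ : Finset V) : Prop :=
  τ ∈ X ∧ τ.Nonempty ∧ σ ∈ X ∧ τ ⊂ σ ∧ ∀ ρ ∈ X, τ ⊂ ρ → ρ = σ

/-- `X` has a free face. -/
def HasFreeFace {V : Type*} [DecidableEq V] (X : Set (Finset V)) : Prop :=
  ∃ τ σ, IsFreeFace X τ σ

/-- An elementary collapse: remove a free face `τ` together with the unique face `σ`
properly containing it. -/
def CollapseStep {V : Type*} [DecidableEq V] (X Y : Set (Finset V)) : Prop :=
  ∃ τ σ, IsFreeFace X τ σ ∧ Y = X \ {τ, σ}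

/-- `X` collapses to `Y` via a finite sequence of elementary collapses. -/
def CollapsesTo {V : Type*} [DecidableEq V] (X Y : Set (Finset V)) : Prop :=
  Relation.ReflTransGen CollapseStep X Y

/-- `X` has dimension exactly `d`: some face has `d + 1` vertices, and
every face has at most `d + 1` vertices. -/
def Dim {V : Type*} [DecidableEq V] (X : Set (Finset V)) (d : ℕ) : Prop :=
  (∃ σ ∈ X, σ.card = d + 1) ∧ ∀ σ ∈ X, σ.card ≤ d + 1

/-- An elementary anticollapse: add a pair `τ ⊂ σ` with `|σ| = |τ| + 1`, where `τ ∉ X`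
and every subset of `σ` of cardinality `|σ| - 1` other than `τ` is already a face of `X`. -/
def AnticollapseStep {V : Type*} [DecidableEq V] (X Y : Set (Finset V)) : Prop :=
  ∃ τ σ : Finset V, τ ⊂ σ ∧ σ.card = τ.card + 1 ∧ τ ∉ X ∧
    (∀ ρ ⊆ σ, ρ.card + 1 = σ.card → ρ ≠ τ → ρ ∈ X) ∧
    Y = X ∪ {τ, σ}

/-- `X` anticollapses to `Y` via a finite sequence of elementary anticollapses. -/
def AnticollapsesTo {V : Type*} [DecidableEq V] (X Y : Set (Finset V)) : Prop :=
  Relation.ReflTransGen AnticollapseStep X Y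

open Finset

section Complex

variable {V : Type*} [DecidableEq V]

lemma exists_subset_erase_ne {ρ τ σ : Finset V} (hρσ : ρ ⊂ σ) (hτσ : τ ⊆ σ) (hρτ : ρ ≠ τ) :
    ∃ x ∈ σ, ρ ⊆ σ.erase x ∧ σ.erase x ≠ τ := by
  by_cases hsub : ρ ⊆ τ
  · obtain ⟨x, hxτ, hρx⟩ := ssubset_iff_exists_subset_erase.1 (ssubset_of_subset_of_ne hsub hρτ)
    exact ⟨x, hτσ hxτ, hρx.trans (erase_subset_erase x hτσ),
      fun h => notMem_erase x σ (h ▸ hxτ)⟩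
  · obtain ⟨y, hyρ, hyτ⟩ := not_subset.1 hsub
    obtain ⟨x, hxσ, hρx⟩ := ssubset_iff_exists_subset_erase.1 hρσ
    exact ⟨x, hxσ, hρx, fun h => hyτ (h ▸ hρx hyρ)⟩

theorem AnticollapseStep.isComplex {X Y : Set (Finset V)} (h : AnticollapseStep X Y)
    (hX : IsComplex X) : IsComplex Y := by
  obtain ⟨τ, σ, hτσ, -, -, hfacets, rfl⟩ := h
  have hσ : ∀ ρ ⊆ σ, ρ ∈ X ∪ {τ, σ} := by
    intro ρ hρ
    by_cases hρσ : ρ = σ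
    · simp [hρσ]
    by_cases hρτ : ρ = τ
    · simp [hρτ]
    obtain ⟨x, hx, hρx, hxτ⟩ := exists_subset_erase_ne (ssubset_of_subset_of_ne hρ hρσ)
      hτσ.subset hρτ
    exact Or.inl (hX _ (hfacets _ (erase_subset x σ) (card_erase_add_one hx) hxτ) ρ hρx)
  rintro ρ (hρ | rfl | rfl) ρ' hρ'
  · exact Or.inl (hX ρ hρ ρ' hρ')
  · exact hσ ρ' (hρ'.trans hτσ.subset)
  · exact hσ ρ' hρ'

end Complex

section Fintype

variable {V : Type*} [Fintype V] [DecidableEq V]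

theorem isFreeFace_compl_insert {X : Set (Finset V)} (hX : IsComplex X) {t : Finset V} {x₀ : V}
    (hx₀ : x₀ ∉ t) (hne : (insert x₀ t)ᶜ.Nonempty) (ht : tᶜ ∈ X)
    (hother : ∀ x ∈ t, (insert x₀ (t.erase x))ᶜ ∉ X) :
    IsFreeFace X (insert x₀ t)ᶜ tᶜ := by
  have hsub : (insert x₀ t)ᶜ ⊂ tᶜ := compl_ssubset_compl.2 (ssubset_insert hx₀)
  refine ⟨hX _ ht _ hsub.subset, hne, ht, hsub, fun ρ hρ hρsub => ?_⟩
  have hρc : ρᶜ ⊂ insert x₀ t := by simpa using compl_ssubset_compl.2 hρsub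
  have key : ∀ x ∈ insert x₀ t, x ∉ ρᶜ → x = x₀ := by
    intro x hx hxρ
    by_contra hxx₀
    have hxt : x ∈ t := (mem_insert.1 hx).resolve_left hxx₀
    refine hother x hxt (hX ρ hρ _ ?_)
    rw [← erase_insert_of_ne (Ne.symm hxx₀), ← compl_subset_compl, compl_compl]
    exact subset_erase.2 ⟨hρc.subset, hxρ⟩
  rw [← compl_compl ρ]
  congr 1
  ext y
  constructor
  · intro hy
    obtain ⟨x, hx, hxρ⟩ := exists_of_ssubset hρc
    have hyx₀ : y ≠ x₀ := fun h => hxρ (key x hx hxρ ▸ h ▸ hy)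
    exact (mem_insert.1 (hρc.subset hy)).resolve_left hyx₀
  · intro hy
    by_contra hyρ
    exact hx₀ (key y (mem_insert_of_mem hy) hyρ ▸ hy)

lemma hasFreeFace_of_univ_mem {X : Set (Finset V)} (hX : IsComplex X) (hV : 2 ≤ Fintype.card V)
    (huniv : (univ : Finset V) ∈ X) : HasFreeFace X := by
  obtain ⟨v⟩ : Nonempty V := Fintype.card_pos_iff.1 (by omega)
  refine ⟨_, _, isFreeFace_compl_insert (t := ∅) hX (notMem_empty v) ?_ (by simpa) (by simp)⟩
  rw [← card_pos, insert_empty, card_compl, card_singleton]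
  omega

lemma hasFreeFace_of_compl_singleton_mem {X : Set (Finset V)} (hX : IsComplex X)
    (hsmall : ∀ s : Finset V, s.card ≤ 1 → s ∈ X) {c w : V} (hc : ({c}ᶜ : Finset V) ∈ X)
    (hw : ({w}ᶜ : Finset V) ∉ X) : HasFreeFace X := by
  have hcw : c ≠ w := fun h => hw (h ▸ hc)
  have hn : 2 ≤ ({w}ᶜ : Finset V).card := by
    by_contra! h
    exact hw (hsmall _ (by omega))
  refine ⟨_, _, isFreeFace_compl_insert hX (by simpa using hcw.symm) ?_ hc fun x hx => ?_⟩
  · rw [card_compl, card_singleton] at hn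
    rw [← card_pos, card_compl, card_pair hcw.symm]
    omega
  · rwa [mem_singleton.1 hx, erase_singleton, insert_empty]

lemma exists_ne_eq_compl_pair {F : Finset V} (hF : Fintype.card V - 2 ≤ F.card) (huniv : F ≠ univ)
    (hfacet : ∀ c : V, F ≠ {c}ᶜ) : ∃ a b : V, a ≠ b ∧ F = {a, b}ᶜ := by
  have h0 : Fᶜ.card ≠ 0 := fun h => huniv ((compl_eq_empty_iff F).1 (card_eq_zero.1 h))
  have h1 : Fᶜ.card ≠ 1 := fun h => by
    obtain ⟨c, hc⟩ := card_eq_one.1 h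
    exact hfacet c (by rw [← hc, compl_compl])
  have h2 : Fᶜ.card ≤ 2 := by
    rw [card_compl]
    omega
  obtain ⟨a, b, hab, h⟩ := card_eq_two.1 (by omega : Fᶜ.card = 2)
  exact ⟨a, b, hab, by rw [← h, compl_compl]⟩

theorem not_anticollapseStep_of_compl_singleton_mem {X Y : Set (Finset V)} (hX : IsComplex X)
    (hfacets : ∀ v : V, ({v}ᶜ : Finset V) ∈ X) : ¬ AnticollapseStep X Y := by
  rintro ⟨τ, σ, hτσ, -, hτX, -, -⟩
  obtain ⟨v, hvτ⟩ : ∃ v, v ∉ τ := by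
    by_contra! h
    exact hτσ.ne' (eq_univ_of_forall h ▸ subset_univ σ |>.antisymm hτσ.subset)
  exact hτX (hX _ (hfacets v) τ (by simpa using hvτ))

/-- The 1-skeleton of the Alexander dual `{s | sᶜ ∉ X}` of `X`. -/
def dualGraph (X : Set (Finset V)) : SimpleGraph V where
  Adj u v := u ≠ v ∧ ({u, v}ᶜ : Finset V) ∉ X
  symm := ⟨fun u v h => ⟨h.1.symm, by rw [pair_comm]; exact h.2⟩⟩
  loopless := ⟨fun _ h => h.1 rfl⟩

lemma dualGraph_adj {X : Set (Finset V)} {u v : V} :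
    (dualGraph X).Adj u v ↔ u ≠ v ∧ ({u, v}ᶜ : Finset V) ∉ X :=
  Iff.rfl

/-- The Alexander dual of `X` has a connected 1-skeleton: its vertices are the `a` with
`{a}ᶜ ∉ X`. -/
def DualConnected (X : Set (Finset V)) : Prop :=
  ∀ a b : V, ({a}ᶜ : Finset V) ∉ X → ({b}ᶜ : Finset V) ∉ X → (dualGraph X).Reachable a b

lemma dualGraph_mono {X Y : Set (Finset V)} (h : X ⊆ Y) : dualGraph Y ≤ dualGraph X :=
  fun _ _ huv => dualGraph_adj.2 ⟨huv.1, fun hX => huv.2 (h hX)⟩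

lemma exists_dualGraph_reachable_of_anticollapse {X : Set (Finset V)} (hX : IsComplex X)
    {τ σ : Finset V} (hτσ : τ ⊂ σ) (hcard : σ.card = τ.card + 1) (hτX : τ ∉ X)
    (hσ : σ ≠ univ) {a : V} (ha : ({a}ᶜ : Finset V) ∉ X) :
    ∃ a', ({a'}ᶜ : Finset V) ∉ X ∪ {τ, σ} ∧ (dualGraph X).Reachable a a' := by
  by_cases haY : ({a}ᶜ : Finset V) ∈ X ∪ {τ, σ}
  swap
  · exact ⟨a, haY, .refl a⟩
  have hσa : σ = {a}ᶜ := by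
    rcases haY with h | h | h
    · exact absurd h ha
    · refine absurd (eq_univ_of_card σ ?_) hσ
      have := card_le_univ σ
      rw [← h, card_compl, card_singleton] at hcard
      omega
    · exact h.symm
  obtain ⟨x, hxτ, hστ⟩ := exists_eq_insert_iff.2 ⟨hτσ.subset, hcard.symm⟩
  have hxσ : x ∈ σ := hστ ▸ mem_insert_self x τ
  have hxa : x ≠ a := by simpa [hσa] using hxσ
  have hτ : τ = {a, x}ᶜ := by
    ext y
    have := Finset.ext_iff.1 (hστ.trans hσa) y
    simp only [mem_insert, mem_compl, mem_singleton] at this ⊢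
    by_cases hy : y = x
    · subst hy
      simp [hxτ]
    · tauto
  have hxX : ({x}ᶜ : Finset V) ∉ X := fun h => hτX (hX _ h τ (by simp [hτ]))
  refine ⟨x, ?_, (dualGraph_adj.2 ⟨hxa.symm, hτ ▸ hτX⟩).reachable⟩
  rintro (h | h | h)
  · exact hxX h
  · have haτ : a ∉ τ := by simp [hτ]
    exact haτ (h ▸ by simpa using hxa.symm)
  · exact mem_compl.1 (h ▸ hxσ) (mem_singleton_self x)

theorem AnticollapseStep.dualConnected {X Y : Set (Finset V)} (h : AnticollapseStep X Y)
    (hX : IsComplex X) (hY : DualConnected Y) : DualConnected X := by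
  obtain ⟨τ, σ, hτσ, hcard, hτX, hfacets, rfl⟩ := h
  intro a b ha hb
  by_cases hσ : σ = univ
  · have hτ : ∀ c : V, ({c}ᶜ : Finset V) ∉ X → {c}ᶜ = τ := fun c hc => by
      by_contra hne
      have hcard : ({c}ᶜ : Finset V).card + 1 = σ.card := by
        rw [hσ, card_univ, ← card_compl_add_card {c}, card_singleton]
      exact hc (hfacets _ (hσ ▸ subset_univ _) hcard hne)
    obtain rfl : a = b := by simpa using (hτ a ha).trans (hτ b hb).symm
    exact .refl a
  · obtain ⟨a', ha'Y, haa'⟩ := exists_dualGraph_reachable_of_anticollapse hX hτσ hcard hτX hσ ha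
    obtain ⟨b', hb'Y, hbb'⟩ := exists_dualGraph_reachable_of_anticollapse hX hτσ hcard hτX hσ hb
    exact haa'.trans ((hY a' b' ha'Y hb'Y).mono (dualGraph_mono Set.subset_union_left) |>.trans
      hbb'.symm)

theorem dualConnected_of_anticollapsesTo_univ {X : Set (Finset V)} (hX : IsComplex X)
    (h : AnticollapsesTo X Set.univ) : DualConnected X := by
  induction h using Relation.ReflTransGen.head_induction_on with
  | refl => exact fun a _ ha => absurd (Set.mem_univ _) ha
  | head hstep _ ih => exact hstep.dualConnected hX (ih (hstep.isComplex hX))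

lemma hasFreeFace_of_dualGraph_adj {X : Set (Finset V)} (hX : IsComplex X)
    (hsmall : ∀ s : Finset V, s.card ≤ 1 → s ∈ X) {a b c : V}
    (hac : (dualGraph X).Adj a c) (hcb : (dualGraph X).Adj c b) (hab : a ≠ b)
    (habX : ({a, b}ᶜ : Finset V) ∈ X) : HasFreeFace X := by
  have hcab : c ∉ ({a, b} : Finset V) := by simp [hac.ne.symm, hcb.ne]
  have hn : 2 ≤ ({a, c}ᶜ : Finset V).card := by
    by_contra! h
    exact hac.2 (hsmall _ (by omega))
  refine ⟨_, _, isFreeFace_compl_insert hX hcab ?_ habX ?_⟩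
  · rw [← card_pos, card_compl, card_insert_of_notMem hcab, card_pair hab]
    rw [card_compl, card_pair hac.ne] at hn
    omega
  · intro x hx
    rw [mem_insert, mem_singleton] at hx
    rcases hx with rfl | rfl
    · rw [erase_insert (by simpa using hab)]
      exact hcb.2
    · rw [pair_comm, erase_insert (by simpa using hab.symm), pair_comm]
      exact hac.2

lemma dualGraph_adj_of_reachable {X : Set (Finset V)} (hX : IsComplex X)
    (hsmall : ∀ s : Finset V, s.card ≤ 1 → s ∈ X) (hfree : ¬ HasFreeFace X) {a b : V}
    (h : (dualGraph X).Reachable a b) (hab : a ≠ b) : (dualGraph X).Adj a b := by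
  rw [SimpleGraph.reachable_iff_reflTransGen] at h
  induction h with
  | refl => exact absurd rfl hab
  | @tail c b _ hcb ih =>
    by_cases hac : a = c
    · exact hac ▸ hcb
    · exact ⟨hab, fun habX => hfree (hasFreeFace_of_dualGraph_adj hX hsmall (ih hac) hcb hab habX)⟩

end Fintype

/-- Let `n ≥ 2` and let `X` be an anticollapsible simplicial complex on `n` vertices of
dimension at least `n - 3` (i.e. with a face of at least `n - 2` vertices). Then `X` has
at least one free face. -/
theorem stmt_10 {V : Type*} [Fintype V] [DecidableEq V] (n : ℕ) (hn : 2 ≤ n)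
    (hcard : Fintype.card V = n) (X : Set (Finset V)) (hX : IsComplex X)
    (hvert : ∀ v : V, ({v} : Finset V) ∈ X)
    (hdim : ∃ σ ∈ X, n - 2 ≤ σ.card)
    (hanti : AnticollapsesTo X (Set.univ : Set (Finset V))) :
    HasFreeFace X := by
  by_contra hfree
  have hne : Nonempty V := Fintype.card_pos_iff.1 (by omega)
  have hsmall : ∀ s : Finset V, s.card ≤ 1 → s ∈ X := fun s hs => by
    obtain ⟨u, hu⟩ := card_le_one_iff_subset_singleton.1 hs
    exact hX _ (hvert u) s hu
  by_cases huniv : (univ : Finset V) ∈ X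
  · exact hfree (hasFreeFace_of_univ_mem hX (hcard ▸ hn) huniv)
  by_cases hfacets : ∀ u : V, ({u}ᶜ : Finset V) ∈ X
  · obtain ⟨Y, hstep, -⟩ := (Relation.ReflTransGen.cases_head hanti).resolve_left
      fun h => huniv (h ▸ Set.mem_univ _)
    exact not_anticollapseStep_of_compl_singleton_mem hX hfacets hstep
  push Not at hfacets
  obtain ⟨w, hw⟩ := hfacets
  by_cases hsome : ∃ c : V, ({c}ᶜ : Finset V) ∈ X
  · obtain ⟨c, hc⟩ := hsome
    exact hfree (hasFreeFace_of_compl_singleton_mem hX hsmall hc hw)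
  push Not at hsome
  obtain ⟨F, hF, hFcard⟩ := hdim
  obtain ⟨a, b, hab, rfl⟩ := exists_ne_eq_compl_pair (hcard ▸ hFcard) (fun h => huniv (h ▸ hF))
    fun c h => hsome c (h ▸ hF)
  have hreach := dualConnected_of_anticollapsesTo_univ hX hanti a b (hsome a) (hsome b)
  exact (dualGraph_adj_of_reachable hX hsmall hfree hreach hab).2 hF
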